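/- Let N ≥ 2, 0 < ε < π/2 and 0 < η < min{π/4, ε/2}. Then there exists a constant C > 0, depending only on N, ε, η, such that for all λ ∈ Σ_ε, all ξ' = (ξ_1, …, ξ_{N−1}) with each ξ_j ∈ Σ̃_η, all x_N > 0 and all m, ℓ ∈ {1, …, N−1}, each of the functions S(x_N) = B^{−2} ∂_{x_N} χ^D_k(λ, ξ', x_N) with 1 ≤ k ≤ N, S(x_N) = λ^{1/2} B^{−2} χ^D_k(λ, ξ', x_N) with 1 ≤ k ≤ N−1, and S(x_N) = i ξ_m B^{−2} χ^D_k(λ, ξ', x_N) with 1 ≤ k ≤ N, satisfies |ξ_ℓ| |S(x_N)| + |∂_{x_N} S(x_N)| ≤ C x_N^{−1}. -/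

import Mathlib

open Complex

noncomputable section

/-- The sector `Σ_ε = {λ ∈ ℂ \ {0} : |arg λ| < π − ε}`. -/
def SSector (ε : ℝ) : Set ℂ := {z | z ≠ 0 ∧ |z.arg| < Real.pi - ε}

/-- The double sector `Σ̃_η = {z ∈ ℂ \ {0} : |arg z| < η or |arg z| > π − η}`. -/
def DSector (η : ℝ) : Set ℂ := {z | z ≠ 0 ∧ (|z.arg| < η ∨ Real.pi - η < |z.arg|)}

/-- `A = (ξ_1² + ⋯ + ξ_{N−1}²)^{1/2}` (principal square root). -/
def AA {n : ℕ} (ξ : Fin n → ℂ) : ℂ := (∑ j, ξ j ^ 2) ^ ((1 : ℂ) / 2)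

/-- `B = (λ + A²)^{1/2}` (principal square root). -/
def BB {n : ℕ} (lam : ℂ) (ξ : Fin n → ℂ) : ℂ := (lam + AA ξ ^ 2) ^ ((1 : ℂ) / 2)

/-- `Ã = (|ξ_1|² + ⋯ + |ξ_{N−1}|²)^{1/2}`. -/
def tA {n : ℕ} (ξ : Fin n → ℂ) : ℝ := Real.sqrt (∑ j, ‖ξ j‖ ^ 2)

/-- `M_λ(ξ', x_N) = (e^{−B x_N} − e^{−A x_N})/(B − A)`. -/
def Mfun {n : ℕ} (lam : ℂ) (ξ : Fin n → ℂ) (x : ℝ) : ℂ :=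
  (Complex.exp (-BB lam ξ * (x : ℂ)) - Complex.exp (-AA ξ * (x : ℂ))) / (BB lam ξ - AA ξ)


/-- `D(A,B) = B³ + AB² + 3A²B − A³`. -/
def DAB {n : ℕ} (lam : ℂ) (ξ : Fin n → ℂ) : ℂ :=
  BB lam ξ ^ 3 + AA ξ * BB lam ξ ^ 2 + 3 * AA ξ ^ 2 * BB lam ξ - AA ξ ^ 3

/-- The Dirichlet velocity symbols `φ^D_{j,k}(λ, ξ', x_N)`; the index `N` of the paper
corresponds to the last index of `Fin N`, the indices `1, …, N−1` to the first `N−1`. -/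
def phiD (N : ℕ) (lam : ℂ) (ξ : Fin (N - 1) → ℂ) (j k : Fin N) (x : ℝ) : ℂ :=
  if hj : (j : ℕ) < N - 1 then
    if hk : (k : ℕ) < N - 1 then
      (if j = k then 1 else 0) * Complex.exp (-BB lam ξ * (x : ℂ))
        + ξ ⟨j, hj⟩ * ξ ⟨k, hk⟩ / AA ξ * Mfun lam ξ x
    else Complex.I * ξ ⟨j, hj⟩ * BB lam ξ / AA ξ * Mfun lam ξ x
  else
    if hk : (k : ℕ) < N - 1 then Complex.I * ξ ⟨k, hk⟩ * Mfun lam ξ x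
    else Complex.exp (-BB lam ξ * (x : ℂ)) - BB lam ξ * Mfun lam ξ x

/-- The Dirichlet pressure symbols `χ^D_k(λ, ξ', x_N)`. -/
def chiD (N : ℕ) (lam : ℂ) (ξ : Fin (N - 1) → ℂ) (k : Fin N) (x : ℝ) : ℂ :=
  if hk : (k : ℕ) < N - 1 then
    -(Complex.I * ξ ⟨k, hk⟩ * (AA ξ + BB lam ξ) / AA ξ) * Complex.exp (-AA ξ * (x : ℂ))
  else (AA ξ + BB lam ξ) * BB lam ξ / AA ξ * Complex.exp (-AA ξ * (x : ℂ))

/-- The Neumann velocity symbols `φ^N_{j,k}(λ, ξ', x_N)`. -/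
def phiN (N : ℕ) (lam : ℂ) (ξ : Fin (N - 1) → ℂ) (j k : Fin N) (x : ℝ) : ℂ :=
  if hj : (j : ℕ) < N - 1 then
    if hk : (k : ℕ) < N - 1 then
      ((if j = k then 1 else 0) / BB lam ξ
          - ξ ⟨j, hj⟩ * ξ ⟨k, hk⟩ * (3 * BB lam ξ - AA ξ) / (DAB lam ξ * BB lam ξ))
          * Complex.exp (-BB lam ξ * (x : ℂ))
        + 2 * ξ ⟨j, hj⟩ * ξ ⟨k, hk⟩ * BB lam ξ / DAB lam ξ * Mfun lam ξ x
    else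
      -(Complex.I * ξ ⟨j, hj⟩ * (BB lam ξ - AA ξ) / DAB lam ξ)
          * Complex.exp (-BB lam ξ * (x : ℂ))
        + Complex.I * ξ ⟨j, hj⟩ * (AA ξ ^ 2 + BB lam ξ ^ 2) / DAB lam ξ * Mfun lam ξ x
  else
    if hk : (k : ℕ) < N - 1 then
      Complex.I * ξ ⟨k, hk⟩ * (BB lam ξ - AA ξ) / DAB lam ξ
          * Complex.exp (-BB lam ξ * (x : ℂ))
        + 2 * Complex.I * ξ ⟨k, hk⟩ * AA ξ * BB lam ξ / DAB lam ξ * Mfun lam ξ x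
    else
      AA ξ * (AA ξ + BB lam ξ) / DAB lam ξ * Complex.exp (-BB lam ξ * (x : ℂ))
        - AA ξ * (AA ξ ^ 2 + BB lam ξ ^ 2) / DAB lam ξ * Mfun lam ξ x

/-- The Neumann pressure symbols `χ^N_k(λ, ξ', x_N)`. -/
def chiN (N : ℕ) (lam : ℂ) (ξ : Fin (N - 1) → ℂ) (k : Fin N) (x : ℝ) : ℂ :=
  if hk : (k : ℕ) < N - 1 then
    -(2 * Complex.I * ξ ⟨k, hk⟩ * BB lam ξ * (AA ξ + BB lam ξ) / DAB lam ξ)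
      * Complex.exp (-AA ξ * (x : ℂ))
  else (AA ξ + BB lam ξ) * (AA ξ ^ 2 + BB lam ξ ^ 2) / DAB lam ξ
      * Complex.exp (-AA ξ * (x : ℂ))

/-- The Robin velocity symbols `φ^R_{j,k}(λ, ξ', x_N)` with Robin parameters `a ≥ 0`, `b > 0`. -/
def phiR (N : ℕ) (a b : ℝ) (lam : ℂ) (ξ : Fin (N - 1) → ℂ) (j k : Fin N) (x : ℝ) : ℂ :=
  if hj : (j : ℕ) < N - 1 then
    if hk : (k : ℕ) < N - 1 then
      ((if j = k then 1 else 0) / ((a : ℂ) + (b : ℂ) * BB lam ξ)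
          - (b : ℂ) * ξ ⟨j, hj⟩ * ξ ⟨k, hk⟩
            / (((a : ℂ) + (b : ℂ) * BB lam ξ)
               * ((a : ℂ) + (b : ℂ) * (AA ξ + BB lam ξ)) * AA ξ))
          * Complex.exp (-BB lam ξ * (x : ℂ))
        + ξ ⟨j, hj⟩ * ξ ⟨k, hk⟩ / (((a : ℂ) + (b : ℂ) * (AA ξ + BB lam ξ)) * AA ξ)
          * Mfun lam ξ x
    else
      -(Complex.I * (b : ℂ) * ξ ⟨j, hj⟩ * BB lam ξ
            / (((a : ℂ) + (b : ℂ) * (AA ξ + BB lam ξ)) * AA ξ))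
          * Complex.exp (-BB lam ξ * (x : ℂ))
        + Complex.I * ξ ⟨j, hj⟩ * BB lam ξ * ((a : ℂ) + (b : ℂ) * BB lam ξ)
            / (((a : ℂ) + (b : ℂ) * (AA ξ + BB lam ξ)) * AA ξ) * Mfun lam ξ x
  else
    if hk : (k : ℕ) < N - 1 then
      Complex.I * ξ ⟨k, hk⟩ / ((a : ℂ) + (b : ℂ) * (AA ξ + BB lam ξ)) * Mfun lam ξ x
    else
      Complex.exp (-BB lam ξ * (x : ℂ))
        - BB lam ξ * ((a : ℂ) + (b : ℂ) * BB lam ξ)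
            / ((a : ℂ) + (b : ℂ) * (AA ξ + BB lam ξ)) * Mfun lam ξ x

/-
On the double sector `Re (ξ_j²) ≥ cos 2η · |ξ_j|²`, so `A² = Σ ξ_j²` lies in the sector
`|arg| ≤ 2η` and `|A|²` is comparable to `Σ |ξ_j|²`: hence `|ξ_j| ≲ |A|` and `|A| ≲ Re A`.
The angle between `λ` and `A²` is at most `π - (ε - 2η)`, so `|B|² = |λ + A²| ≳ |λ| + |A|²`,
i.e. `|A|, |λ^{1/2}| ≲ |B|`. Every `S` is `c e^{-A x_N}` with `|c|` bounded by these ratios, and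
`|ξ_ℓ| |S| + |∂S| ≲ |A| e^{-Re A · x_N} ≲ Re A · e^{-Re A · x_N} ≤ x_N⁻¹`.
-/

lemma cpow_one_div_two_sq (w : ℂ) : (w ^ ((1 : ℂ) / 2)) ^ 2 = w := by
  rw [one_div]
  exact cpow_ofNat_inv_pow w 2

lemma norm_cpow_one_div_two_sq (w : ℂ) : ‖w ^ ((1 : ℂ) / 2)‖ ^ 2 = ‖w‖ := by
  rw [← norm_pow, cpow_one_div_two_sq]

lemma norm_cpow_one_div_two_le_two_mul_re {w : ℂ} (hw : 0 ≤ w.re) :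
    ‖w ^ ((1 : ℂ) / 2)‖ ≤ 2 * (w ^ ((1 : ℂ) / 2)).re := by
  have him : |(w ^ ((1 : ℂ) / 2)).im| ≤ (w ^ ((1 : ℂ) / 2)).re := by
    rw [one_div, abs_cpow_inv_two_im, cpow_inv_two_re]
    exact Real.sqrt_le_sqrt (by linarith)
  have hre : 0 ≤ (w ^ ((1 : ℂ) / 2)).re := (abs_nonneg _).trans him
  calc ‖w ^ ((1 : ℂ) / 2)‖
      ≤ |(w ^ ((1 : ℂ) / 2)).re| + |(w ^ ((1 : ℂ) / 2)).im| := norm_le_abs_re_add_abs_im _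
    _ ≤ 2 * (w ^ ((1 : ℂ) / 2)).re := by rw [abs_of_nonneg hre]; linarith

lemma cos_two_mul_mul_sq_norm_le_re_sq {η : ℝ} (hη : η ≤ Real.pi / 2) {z : ℂ}
    (hz : z ∈ DSector η) : Real.cos (2 * η) * ‖z‖ ^ 2 ≤ (z ^ 2).re := by
  have hre : (z ^ 2).re = ‖z‖ ^ 2 * Real.cos (2 * |z.arg|) := by
    have hc := norm_mul_cos_arg z
    have hs := norm_mul_sin_arg z
    rw [show 2 * |z.arg| = |2 * z.arg| by rw [abs_mul, abs_two], Real.cos_abs,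
      Real.cos_two_mul, pow_two, mul_re, ← hc, ← hs]
    nlinarith [Real.sin_sq_add_cos_sq z.arg]
  have harg := abs_arg_le_pi z
  have hcos : Real.cos (2 * η) ≤ Real.cos (2 * |z.arg|) := by
    rcases hz.2 with h | h
    · exact Real.cos_le_cos_of_nonneg_of_le_pi (by positivity) (by linarith) (by linarith)
    · rw [← Real.cos_two_pi_sub (2 * |z.arg|)]
      exact Real.cos_le_cos_of_nonneg_of_le_pi (by linarith) (by linarith) (by linarith)
  rw [hre, mul_comm]
  exact mul_le_mul_of_nonneg_left hcos (by positivity)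

lemma abs_arg_le_of_cos_mul_norm_le_re {θ : ℝ} (hθ : 0 ≤ θ) {w : ℂ}
    (h : Real.cos θ * ‖w‖ ≤ w.re) : |w.arg| ≤ θ := by
  by_contra! hlt
  have hw : w ≠ 0 := by
    rintro rfl
    simp only [arg_zero, abs_zero] at hlt
    linarith
  have hcos : Real.cos |w.arg| < Real.cos θ :=
    Real.cos_lt_cos_of_nonneg_of_le_pi hθ (abs_arg_le_pi w) hlt
  have hre := norm_mul_cos_arg w
  rw [← Real.cos_abs] at hre
  nlinarith [norm_pos_iff.2 hw]

lemma sqrt_mul_norm_add_norm_le_norm_add {δ : ℝ} (hδ : 0 ≤ δ) {u v : ℂ}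
    (h : |u.arg - v.arg| ≤ Real.pi - δ) :
    √((1 - Real.cos δ) / 2) * (‖u‖ + ‖v‖) ≤ ‖u + v‖ := by
  have hcos : -Real.cos δ ≤ Real.cos (u.arg - v.arg) := by
    rw [← Real.cos_abs (u.arg - v.arg), ← Real.cos_pi_sub δ]
    exact Real.cos_le_cos_of_nonneg_of_le_pi (abs_nonneg _) (by linarith) h
  have hinner : ‖u‖ * ‖v‖ * Real.cos (u.arg - v.arg) = u.re * v.re + u.im * v.im := by
    rw [Real.cos_sub]
    linear_combination (‖v‖ * Real.cos v.arg) * norm_mul_cos_arg u + u.re * norm_mul_cos_arg v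
      + (‖v‖ * Real.sin v.arg) * norm_mul_sin_arg u + u.im * norm_mul_sin_arg v
  have hsq : ‖u + v‖ ^ 2 = ‖u‖ ^ 2 + ‖v‖ ^ 2 + 2 * (‖u‖ * ‖v‖ * Real.cos (u.arg - v.arg)) := by
    simp only [hinner, Complex.sq_norm, normSq_apply, add_re, add_im]
    ring
  have hκ : 0 ≤ (1 - Real.cos δ) / 2 := by linarith [Real.cos_le_one δ]
  rw [← sq_le_sq₀ (by positivity) (norm_nonneg _), mul_pow, Real.sq_sqrt hκ, hsq]
  nlinarith [mul_le_mul_of_nonneg_left hcos (mul_nonneg (norm_nonneg u) (norm_nonneg v)),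
    mul_nonneg (by linarith [Real.neg_one_le_cos δ] : 0 ≤ 1 + Real.cos δ)
      (sq_nonneg (‖u‖ - ‖v‖))]

lemma le_mul_of_sq_le_mul_sq {a b M : ℝ} (hb : 0 ≤ b) (hM : 1 ≤ M) (h : a ^ 2 ≤ M * b ^ 2) :
    a ≤ M * b := by
  have hsq : a ^ 2 ≤ (M * b) ^ 2 := h.trans (by nlinarith [sq_nonneg b])
  exact (le_abs_self a).trans (abs_le_of_sq_le_sq hsq (by positivity))

section SumOfSquares

variable {n : ℕ}

lemma AA_sq (ξ : Fin n → ℂ) : AA ξ ^ 2 = ∑ j, ξ j ^ 2 := cpow_one_div_two_sq _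

lemma sq_norm_BB (lam : ℂ) (ξ : Fin n → ℂ) : ‖BB lam ξ‖ ^ 2 = ‖lam + AA ξ ^ 2‖ :=
  norm_cpow_one_div_two_sq _

variable {ξ : Fin n → ℂ} {c : ℝ} (hξ : ∀ j, c * ‖ξ j‖ ^ 2 ≤ (ξ j ^ 2).re)
include hξ

lemma mul_sum_sq_norm_le_re_AA_sq : c * ∑ j, ‖ξ j‖ ^ 2 ≤ (AA ξ ^ 2).re := by
  rw [AA_sq, re_sum, Finset.mul_sum]
  exact Finset.sum_le_sum fun j _ => hξ j

lemma mul_norm_AA_sq_le_re (hc : 0 ≤ c) : c * ‖AA ξ ^ 2‖ ≤ (AA ξ ^ 2).re := by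
  refine le_trans ?_ (mul_sum_sq_norm_le_re_AA_sq hξ)
  gcongr
  rw [AA_sq]
  exact (norm_sum_le _ _).trans_eq (by simp only [norm_pow])

lemma sq_norm_le_inv_mul_sq_norm_AA (hc : 0 < c) (j : Fin n) :
    ‖ξ j‖ ^ 2 ≤ c⁻¹ * ‖AA ξ‖ ^ 2 := by
  rw [le_inv_mul_iff₀ hc, ← norm_pow (AA ξ)]
  calc c * ‖ξ j‖ ^ 2 ≤ c * ∑ j, ‖ξ j‖ ^ 2 := by
        gcongr
        exact Finset.single_le_sum (f := fun i => ‖ξ i‖ ^ 2) (fun i _ => by positivity)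
          (Finset.mem_univ j)
    _ ≤ ‖AA ξ ^ 2‖ := (mul_sum_sq_norm_le_re_AA_sq hξ).trans (re_le_norm _)

lemma AA_ne_zero (hc : 0 < c) {j : Fin n} (hj : ξ j ≠ 0) : AA ξ ≠ 0 := by
  intro hA
  have := sq_norm_le_inv_mul_sq_norm_AA hξ hc j
  rw [hA, norm_zero] at this
  have : 0 < ‖ξ j‖ ^ 2 := by positivity
  linarith

end SumOfSquares

structure SectorBounds {n : ℕ} (M : ℝ) (lam : ℂ) (ξ : Fin n → ℂ) : Prop where
  AA_ne_zero : AA ξ ≠ 0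
  norm_AA_le_re : ‖AA ξ‖ ≤ M * (AA ξ).re
  norm_le_norm_AA : ∀ j, ‖ξ j‖ ≤ M * ‖AA ξ‖
  norm_AA_le_norm_BB : ‖AA ξ‖ ≤ M * ‖BB lam ξ‖
  norm_sqrt_le_norm_BB : ‖lam ^ ((1 : ℂ) / 2)‖ ≤ M * ‖BB lam ξ‖

theorem exists_sectorBounds {ε η : ℝ} (hη : 0 < η) (hη4 : η < Real.pi / 4)
    (hηε : 2 * η < ε) (hε : ε ≤ Real.pi) :
    ∃ M, 0 < M ∧ ∀ {n : ℕ} (lam : ℂ) (ξ : Fin n → ℂ), lam ∈ SSector ε →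
      (∀ j, ξ j ∈ DSector η) → Nonempty (Fin n) → SectorBounds M lam ξ := by
  set c := Real.cos (2 * η)
  set κ := √((1 - Real.cos (ε - 2 * η)) / 2)
  have hc : 0 < c := Real.cos_pos_of_mem_Ioo ⟨by linarith, by linarith⟩
  have hκ : 0 < κ := by
    have := Real.cos_lt_cos_of_nonneg_of_le_pi le_rfl (by linarith) (by linarith : 0 < ε - 2 * η)
    rw [Real.cos_zero] at this
    exact Real.sqrt_pos.2 (by linarith)
  set M := 2 + c⁻¹ + κ⁻¹
  have hM : 1 ≤ M := by have := inv_pos.2 hc; have := inv_pos.2 hκ; linarith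
  refine ⟨M, by linarith, fun lam ξ hlam hξ ⟨j₀⟩ => ?_⟩
  have hξc : ∀ j, c * ‖ξ j‖ ^ 2 ≤ (ξ j ^ 2).re := fun j =>
    cos_two_mul_mul_sq_norm_le_re_sq (by linarith) (hξ j)
  have hw := mul_norm_AA_sq_le_re hξc hc.le
  have hre : 0 ≤ (AA ξ ^ 2).re := (by positivity : 0 ≤ c * ‖AA ξ ^ 2‖).trans hw
  have harg : |(AA ξ ^ 2).arg| ≤ 2 * η := abs_arg_le_of_cos_mul_norm_le_re (by linarith) hw
  have hB : κ * (‖lam‖ + ‖AA ξ‖ ^ 2) ≤ ‖BB lam ξ‖ ^ 2 := by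
    rw [sq_norm_BB, ← norm_pow]
    refine sqrt_mul_norm_add_norm_le_norm_add (by linarith) ?_
    linarith [abs_sub lam.arg (AA ξ ^ 2).arg, hlam.2]
  have hle_B : ∀ a : ℝ, 0 ≤ a → a ^ 2 ≤ ‖lam‖ + ‖AA ξ‖ ^ 2 → a ≤ M * ‖BB lam ξ‖ := by
    intro a ha h
    refine le_mul_of_sq_le_mul_sq (norm_nonneg _) hM (h.trans ?_)
    calc ‖lam‖ + ‖AA ξ‖ ^ 2 ≤ κ⁻¹ * ‖BB lam ξ‖ ^ 2 := (le_inv_mul_iff₀ hκ).2 hB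
      _ ≤ M * ‖BB lam ξ‖ ^ 2 := by gcongr; linarith [inv_pos.2 hc]
  refine ⟨AA_ne_zero hξc hc (hξ j₀).1, ?_, fun j => ?_, hle_B _ (norm_nonneg _) ?_,
    hle_B _ (norm_nonneg _) ?_⟩
  · have h2 : ‖AA ξ‖ ≤ 2 * (AA ξ).re := norm_cpow_one_div_two_le_two_mul_re (by rwa [← AA_sq])
    have hreA : 0 ≤ (AA ξ).re := by linarith [norm_nonneg (AA ξ)]
    exact h2.trans (mul_le_mul_of_nonneg_right (by linarith [inv_pos.2 hc, inv_pos.2 hκ]) hreA)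
  · refine le_mul_of_sq_le_mul_sq (norm_nonneg _) hM
      ((sq_norm_le_inv_mul_sq_norm_AA hξc hc j).trans ?_)
    gcongr
    linarith [inv_pos.2 hκ]
  · linarith [norm_nonneg lam]
  · rw [norm_cpow_one_div_two_sq]
    linarith [sq_nonneg ‖AA ξ‖]

lemma hasDerivAt_exp_neg_mul (A : ℂ) (y : ℝ) :
    HasDerivAt (fun t : ℝ => exp (-A * t)) (-A * exp (-A * y)) y := by
  simpa [mul_comm] using (((hasDerivAt_id (y : ℂ)).const_mul (-A)).cexp).comp_ofReal

lemma mul_exp_neg_mul_le_inv (a : ℝ) {x : ℝ} (hx : 0 < x) : a * Real.exp (-(a * x)) ≤ x⁻¹ := by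
  have h := Real.mul_exp_neg_le_exp_neg_one (a * x)
  have h1 : Real.exp (-1) ≤ 1 := Real.exp_le_one_iff.2 (by norm_num)
  calc a * Real.exp (-(a * x)) = (a * x * Real.exp (-(a * x))) * x⁻¹ := by field_simp
    _ ≤ 1 * x⁻¹ := by gcongr; linarith
    _ = x⁻¹ := one_mul _

lemma norm_mul_add_norm_deriv_le {A c z : ℂ} {M K x : ℝ} (hM : 0 ≤ M) (hA : ‖A‖ ≤ M * A.re)
    (hz : ‖z‖ ≤ M * ‖A‖) (hc : ‖c‖ ≤ K) (hx : 0 < x) :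
    ‖z‖ * ‖c * exp (-A * x)‖ + ‖deriv (fun y : ℝ => c * exp (-A * y)) x‖
      ≤ M * (M + 1) * K * x⁻¹ := by
  have hK : 0 ≤ K := (norm_nonneg c).trans hc
  have hexp : ‖exp (-A * x)‖ = Real.exp (-(A.re * x)) := by simp [norm_exp]
  rw [((hasDerivAt_exp_neg_mul A x).const_mul c).deriv]
  calc ‖z‖ * ‖c * exp (-A * x)‖ + ‖c * (-A * exp (-A * x))‖
      = (‖z‖ + ‖A‖) * ‖c‖ * Real.exp (-(A.re * x)) := by
        simp only [norm_mul, norm_neg, hexp]; ring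
    _ ≤ (M * ‖A‖ + ‖A‖) * K * Real.exp (-(A.re * x)) := by gcongr
    _ = (M + 1) * K * (‖A‖ * Real.exp (-(A.re * x))) := by ring
    _ ≤ (M + 1) * K * (M * (A.re * Real.exp (-(A.re * x)))) := by
        rw [← mul_assoc M]
        gcongr
    _ ≤ (M + 1) * K * (M * x⁻¹) := by gcongr; exact mul_exp_neg_mul_le_inv _ hx
    _ = M * (M + 1) * K * x⁻¹ := by ring

lemma chiD_eq_mul_exp (N : ℕ) (lam : ℂ) (ξ : Fin (N - 1) → ℂ) (k : Fin N) (y : ℝ) :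
    chiD N lam ξ k y = chiD N lam ξ k 0 * exp (-AA ξ * y) := by
  unfold chiD
  split_ifs <;> simp

lemma deriv_chiD (N : ℕ) (lam : ℂ) (ξ : Fin (N - 1) → ℂ) (k : Fin N) (y : ℝ) :
    deriv (chiD N lam ξ k) y = -AA ξ * chiD N lam ξ k y := by
  have h : chiD N lam ξ k = fun t : ℝ => chiD N lam ξ k 0 * exp (-AA ξ * t) :=
    funext (chiD_eq_mul_exp N lam ξ k)
  rw [h, ((hasDerivAt_exp_neg_mul _ y).const_mul _).deriv]
  ring

namespace SectorBounds

variable {N : ℕ} {M : ℝ} {lam : ℂ} {ξ : Fin (N - 1) → ℂ} (h : SectorBounds M lam ξ) (hM : 0 ≤ M)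
include h

lemma BB_ne_zero : BB lam ξ ≠ 0 := by
  intro hB
  have := h.norm_AA_le_norm_BB
  rw [hB, norm_zero, mul_zero] at this
  exact h.AA_ne_zero (norm_le_zero_iff.1 this)

lemma norm_AA_add_BB_le : ‖AA ξ + BB lam ξ‖ ≤ (M + 1) * ‖BB lam ξ‖ :=
  (norm_add_le _ _).trans (by linarith [h.norm_AA_le_norm_BB])

lemma norm_mul_inv_BB_sq_mul_le {x y : ℂ} {K : ℝ} (hxy : ‖x‖ * ‖y‖ ≤ K * ‖BB lam ξ‖ ^ 2) :
    ‖x * (BB lam ξ ^ 2)⁻¹ * y‖ ≤ K := by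
  have hB : 0 < ‖BB lam ξ‖ ^ 2 := by have := norm_pos_iff.2 h.BB_ne_zero; positivity
  rw [norm_mul, norm_mul, norm_inv, norm_pow, mul_right_comm, ← div_eq_mul_inv,
    div_le_iff₀ hB]
  exact hxy

include hM

lemma norm_chiD_zero_le {k : Fin N} (hk : (k : ℕ) < N - 1) :
    ‖chiD N lam ξ k 0‖ ≤ M * (M + 1) * ‖BB lam ξ‖ := by
  have hA : 0 < ‖AA ξ‖ := norm_pos_iff.2 h.AA_ne_zero
  simp only [chiD, dif_pos hk, ofReal_zero, mul_zero, exp_zero, mul_one, norm_neg, norm_div,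
    norm_mul, norm_I, one_mul]
  rw [div_le_iff₀ hA]
  calc ‖ξ ⟨k, hk⟩‖ * ‖AA ξ + BB lam ξ‖ ≤ (M * ‖AA ξ‖) * ((M + 1) * ‖BB lam ξ‖) :=
        mul_le_mul (h.norm_le_norm_AA _) h.norm_AA_add_BB_le (norm_nonneg _) (by positivity)
    _ = M * (M + 1) * ‖BB lam ξ‖ * ‖AA ξ‖ := by ring

lemma norm_AA_mul_norm_chiD_zero_le (k : Fin N) :
    ‖AA ξ‖ * ‖chiD N lam ξ k 0‖ ≤ (M + 1) ^ 3 * ‖BB lam ξ‖ ^ 2 := by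
  by_cases hk : (k : ℕ) < N - 1
  · calc ‖AA ξ‖ * ‖chiD N lam ξ k 0‖ ≤ (M * ‖BB lam ξ‖) * (M * (M + 1) * ‖BB lam ξ‖) :=
          mul_le_mul h.norm_AA_le_norm_BB (h.norm_chiD_zero_le hM hk) (norm_nonneg _)
            (by positivity)
      _ ≤ (M + 1) ^ 3 * ‖BB lam ξ‖ ^ 2 := by
          have : M * M * (M + 1) ≤ (M + 1) ^ 3 := by nlinarith
          nlinarith [sq_nonneg ‖BB lam ξ‖]
  · have hA : ‖AA ξ‖ ≠ 0 := norm_ne_zero_iff.2 h.AA_ne_zero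
    simp only [chiD, dif_neg hk, ofReal_zero, mul_zero, exp_zero, mul_one, norm_div, norm_mul]
    rw [mul_div_cancel₀ _ hA]
    calc ‖AA ξ + BB lam ξ‖ * ‖BB lam ξ‖ ≤ (M + 1) * ‖BB lam ξ‖ * ‖BB lam ξ‖ := by
          gcongr; exact h.norm_AA_add_BB_le
      _ ≤ (M + 1) ^ 3 * ‖BB lam ξ‖ ^ 2 := by
          have : M + 1 ≤ (M + 1) ^ 3 := le_self_pow₀ (by linarith) (by norm_num)
          nlinarith [sq_nonneg ‖BB lam ξ‖]

lemma norm_sqrt_mul_norm_chiD_zero_le {k : Fin N} (hk : (k : ℕ) < N - 1) :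
    ‖lam ^ ((1 : ℂ) / 2)‖ * ‖chiD N lam ξ k 0‖ ≤ (M + 1) ^ 4 * ‖BB lam ξ‖ ^ 2 := by
  calc ‖lam ^ ((1 : ℂ) / 2)‖ * ‖chiD N lam ξ k 0‖
      ≤ (M * ‖BB lam ξ‖) * (M * (M + 1) * ‖BB lam ξ‖) :=
        mul_le_mul h.norm_sqrt_le_norm_BB (h.norm_chiD_zero_le hM hk) (norm_nonneg _)
          (by positivity)
    _ ≤ (M + 1) ^ 4 * ‖BB lam ξ‖ ^ 2 := by
        have : M * M * (M + 1) ≤ (M + 1) ^ 4 := by nlinarith [mul_nonneg hM hM]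
        nlinarith [sq_nonneg ‖BB lam ξ‖]

lemma norm_mul_norm_chiD_zero_le (k : Fin N) (m : Fin (N - 1)) :
    ‖ξ m‖ * ‖chiD N lam ξ k 0‖ ≤ (M + 1) ^ 4 * ‖BB lam ξ‖ ^ 2 := by
  calc ‖ξ m‖ * ‖chiD N lam ξ k 0‖ ≤ M * (‖AA ξ‖ * ‖chiD N lam ξ k 0‖) := by
        rw [← mul_assoc]
        exact mul_le_mul_of_nonneg_right (h.norm_le_norm_AA m) (norm_nonneg _)
    _ ≤ (M + 1) * ((M + 1) ^ 3 * ‖BB lam ξ‖ ^ 2) := by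
        exact mul_le_mul (by linarith) (h.norm_AA_mul_norm_chiD_zero_le hM k) (by positivity)
          (by positivity)
    _ = (M + 1) ^ 4 * ‖BB lam ξ‖ ^ 2 := by ring

end SectorBounds

theorem dirichlet_pressure_symbol_bounds_general
    (N : ℕ) (ε η : ℝ) (hε' : ε < Real.pi / 2)
    (hη : 0 < η) (hη' : η < min (Real.pi / 4) (ε / 2)) :
    ∃ C : ℝ, 0 < C ∧ ∀ (lam : ℂ), lam ∈ SSector ε →
      ∀ ξ : Fin (N - 1) → ℂ, (∀ i, ξ i ∈ DSector η) →
      ∀ x : ℝ, 0 < x → ∀ k : Fin N, ∀ m l : Fin (N - 1), ∀ S : ℝ → ℂ,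
        (S = fun y => ((BB lam ξ) ^ (2 : ℕ))⁻¹ * deriv (chiD N lam ξ k) y) ∨
        ((S = fun y => lam ^ ((1 : ℂ) / 2) * ((BB lam ξ) ^ (2 : ℕ))⁻¹ * chiD N lam ξ k y)
          ∧ (k : ℕ) < N - 1) ∨
        (S = fun y => Complex.I * ξ m * ((BB lam ξ) ^ (2 : ℕ))⁻¹ * chiD N lam ξ k y) →
        ‖ξ l‖ * ‖S x‖ + ‖deriv S x‖ ≤ C * x⁻¹ := by
  obtain ⟨M, hM, hbounds⟩ := exists_sectorBounds (ε := ε) hη (lt_of_lt_of_le hη' (min_le_left _ _))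
    (by linarith [min_le_right (Real.pi / 4) (ε / 2)]) (by linarith [Real.pi_pos])
  refine ⟨M * (M + 1) * (M + 1) ^ 4, by positivity, ?_⟩
  intro lam hlam ξ hξ x hx k m l S hS
  have h := hbounds lam ξ hlam hξ ⟨l⟩
  obtain ⟨c, hc, rfl⟩ : ∃ c : ℂ, ‖c‖ ≤ (M + 1) ^ 4 ∧ S = fun y : ℝ => c * exp (-AA ξ * y) := by
    rcases hS with rfl | ⟨rfl, hk⟩ | rfl
    · refine ⟨-AA ξ * (BB lam ξ ^ 2)⁻¹ * chiD N lam ξ k 0,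
        h.norm_mul_inv_BB_sq_mul_le ?_, ?_⟩
      · rw [norm_neg]
        exact (h.norm_AA_mul_norm_chiD_zero_le hM.le k).trans (by gcongr <;> linarith)
      · ext y
        rw [deriv_chiD, chiD_eq_mul_exp]
        ring
    · refine ⟨lam ^ ((1 : ℂ) / 2) * (BB lam ξ ^ 2)⁻¹ * chiD N lam ξ k 0,
        h.norm_mul_inv_BB_sq_mul_le (h.norm_sqrt_mul_norm_chiD_zero_le hM.le hk), ?_⟩
      ext y
      rw [chiD_eq_mul_exp]
      ring
    · refine ⟨I * ξ m * (BB lam ξ ^ 2)⁻¹ * chiD N lam ξ k 0,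
        h.norm_mul_inv_BB_sq_mul_le ?_, ?_⟩
      · rw [norm_mul, norm_I, one_mul]
        exact h.norm_mul_norm_chiD_zero_le hM.le k m
      · ext y
        rw [chiD_eq_mul_exp]
        ring
  exact norm_mul_add_norm_deriv_le hM.le h.norm_AA_le_re (h.norm_le_norm_AA l) hc hx

/-- Bounds for the decomposed Dirichlet pressure symbols. -/
theorem dirichlet_pressure_symbol_bounds
    (N : ℕ) (hN : 2 ≤ N) (ε η : ℝ) (hε : 0 < ε) (hε' : ε < Real.pi / 2)
    (hη : 0 < η) (hη' : η < min (Real.pi / 4) (ε / 2)) :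
    ∃ C : ℝ, 0 < C ∧ ∀ (lam : ℂ), lam ∈ SSector ε →
      ∀ ξ : Fin (N - 1) → ℂ, (∀ i, ξ i ∈ DSector η) →
      ∀ x : ℝ, 0 < x → ∀ k : Fin N, ∀ m l : Fin (N - 1), ∀ S : ℝ → ℂ,
        (S = fun y => ((BB lam ξ) ^ (2 : ℕ))⁻¹ * deriv (chiD N lam ξ k) y) ∨
        ((S = fun y => lam ^ ((1 : ℂ) / 2) * ((BB lam ξ) ^ (2 : ℕ))⁻¹ * chiD N lam ξ k y)
          ∧ (k : ℕ) < N - 1) ∨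
        (S = fun y => Complex.I * ξ m * ((BB lam ξ) ^ (2 : ℕ))⁻¹ * chiD N lam ξ k y) →
        ‖ξ l‖ * ‖S x‖ + ‖deriv S x‖ ≤ C * x⁻¹ :=
  dirichlet_pressure_symbol_bounds_general N ε η hε' hη hη'

end
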